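/- If a lattice L satisfies the axiom (SD^ω_∨), then L is dually zipper distributive. Moreover, if L is ℵ₀-lower continuous, then L satisfies (SD^ω_∨) if and only if L is dually zipper distributive. -/
import Mathlib


/-- `dstar a s` is the element `a*s` defined (for nonempty `s`, with the sequence written in
reverse, head = last entry) by `a*⟨b⟩ = a ⊔ b` and `a*(s⌢⟨b⟩) = a ⊔ (b ⊓ a*s)`. -/
def dstar {α : Type*} [Lattice α] (a : α) : List α → α
  | [] => a
  | [b] => a ⊔ b
  | b :: s => a ⊔ (b ⊓ dstar a s)

/-- `a*B`: the set of all `a*s` for `s` a nonempty finite sequence of elements of `B`. -/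
def dstarSet {α : Type*} [Lattice α] (a : α) (B : Set α) : Set α :=
  {x | ∃ s : List α, s ≠ [] ∧ (∀ b ∈ s, b ∈ B) ∧ x = dstar a s}

/-- `diam s x` is `s◊x`, defined (with the sequence written in reverse, head = last entry) by
`∅◊x = x` and `(s⌢⟨a⟩)◊x = a ⊔ (s◊x)` if `|s|` is even, `a ⊓ (s◊x)` if `|s|` is odd. -/
def diam {α : Type*} [Lattice α] : List α → α → α
  | [], x => x
  | a :: s, x => if s.length % 2 = 0 then a ⊔ diam s x else a ⊓ diam s x

/-- The axiom `(SD^ω_∨)`: for every finite sequence `s` and all `a b c`,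
`s◊(a ⊔ (b ⊓ c))` is the greatest lower bound of `{s◊(a*t) : t nonempty sequence in {b,c}}`. -/
def SDomega (α : Type*) [Lattice α] : Prop :=
  ∀ (s : List α) (a b c : α),
    IsGLB ((fun x => diam s x) '' dstarSet a {b, c}) (diam s (a ⊔ (b ⊓ c)))

/-- A lattice is dually zipper distributive. -/
def DuallyZipperDistributive (α : Type*) [Lattice α] : Prop :=
  ∀ a b c : α, IsGLB (dstarSet a {b, c}) (a ⊔ (b ⊓ c))

/-- A lattice is `ℵ₀`-lower continuous. -/
def Aleph0LowerContinuous (α : Type*) [SemilatticeSup α] : Prop :=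
  ∀ (a : α) (X : Set α) (m : α), X.Nonempty → X.Countable → DirectedOn (· ≥ ·) X →
    IsGLB X m → IsGLB ((fun x => a ⊔ x) '' X) (a ⊔ m)

section Aux

variable {α : Type*} [Lattice α]

lemma dstar_cons (a b : α) {s : List α} (h : s ≠ []) :
    dstar a (b :: s) = a ⊔ (b ⊓ dstar a s) := by
  cases s with
  | nil => exact absurd rfl h
  | cons c t => rfl

lemma le_dstar (a : α) (s : List α) : a ≤ dstar a s := by
  cases s with
  | nil => exact le_rfl
  | cons b t =>
    cases t with
    | nil => exact le_sup_left
    | cons c u => exact le_sup_left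

lemma dstar_append_le_right (a : α) (s : List α) {t : List α} (ht : t ≠ []) :
    dstar a (s ++ t) ≤ dstar a t := by
  induction s with
  | nil => simp
  | cons b s' ih =>
    have hne : s' ++ t ≠ [] := by simp [ht]
    rw [List.cons_append, dstar_cons a b hne]
    exact sup_le (le_dstar a t) (le_trans inf_le_right ih)

lemma dstar_append_le_left (a : α) {s : List α} (t : List α) (hs : s ≠ []) :
    dstar a (s ++ t) ≤ dstar a s := by
  induction s with
  | nil => exact absurd rfl hs
  | cons b s' ih =>
    cases s' with
    | nil =>
      cases t with
      | nil => exact le_rfl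
      | cons c u =>
        rw [List.cons_append, List.nil_append,
          dstar_cons a b (by simp : (c :: u : List α) ≠ [])]
        exact sup_le le_sup_left (le_trans inf_le_left le_sup_right)
    | cons c u =>
      have h1 : (c :: u : List α) ≠ [] := by simp
      have h2 : (c :: u) ++ t ≠ [] := by simp
      rw [List.cons_append, dstar_cons a b h2, dstar_cons a b h1]
      exact sup_le_sup_left (inf_le_inf_left b (ih h1)) a

lemma diam_mono (s : List α) {x y : α} (h : x ≤ y) : diam s x ≤ diam s y := by
  induction s with
  | nil => exact h
  | cons a t ih =>
    simp only [diam]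
    split_ifs
    · exact sup_le_sup_left ih a
    · exact inf_le_inf_left a ih

lemma dstarSet_countable (a : α) {B : Set α} (hB : B.Countable) :
    (dstarSet a B).Countable := by
  haveI := hB.to_subtype
  have hsub : dstarSet a B ⊆ Set.range (fun l : List B => dstar a (l.map Subtype.val)) := by
    rintro x ⟨s, -, hsB, rfl⟩
    refine ⟨s.attach.map fun b => ⟨b.1, hsB b.1 b.2⟩, ?_⟩
    simp [List.map_map]
  exact (Set.countable_range _).mono hsub

lemma dstarSet_directed (a : α) (B : Set α) : DirectedOn (· ≥ ·) (dstarSet a B) := by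
  rintro x ⟨s, hs, hsB, rfl⟩ y ⟨t, ht, htB, rfl⟩
  refine ⟨dstar a (s ++ t), ⟨s ++ t, by simp [hs], ?_, rfl⟩,
    dstar_append_le_left a t hs, dstar_append_le_right a s ht⟩
  intro b hb
  rcases List.mem_append.1 hb with h | h
  · exact hsB b h
  · exact htB b h

lemma isGLB_inf_image {S : Set α} {m : α} (d : α) (hne : S.Nonempty) (h : IsGLB S m) :
    IsGLB ((fun x => d ⊓ x) '' S) (d ⊓ m) := by
  constructor
  · rintro y ⟨x, hx, rfl⟩
    exact inf_le_inf_left d (h.1 hx)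
  · intro w hw
    obtain ⟨x0, hx0⟩ := hne
    have hwd : w ≤ d := le_trans (hw ⟨x0, hx0, rfl⟩) inf_le_left
    have hwm : w ≤ m := h.2 fun x hx => le_trans (hw ⟨x, hx, rfl⟩) inf_le_right
    exact le_inf hwd hwm

end Aux

/-- If a lattice satisfies `(SD^ω_∨)` then it is dually zipper distributive; moreover if it is
`ℵ₀`-lower continuous, then `(SD^ω_∨)` is equivalent to dual zipper distributivity. -/
theorem sdOmega_implies_duallyZipper {L : Type*} [Lattice L] :
    (SDomega L → DuallyZipperDistributive L) ∧
    (Aleph0LowerContinuous L → (SDomega L ↔ DuallyZipperDistributive L)) := by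
  have fwd : SDomega L → DuallyZipperDistributive L := by
    intro h a b c
    have := h [] a b c
    simpa [diam, Set.image_id'] using this
  refine ⟨fwd, fun hLC => ⟨fwd, fun hDZ => ?_⟩⟩
  intro s a b c
  induction s with
  | nil => simpa [diam, Set.image_id'] using hDZ a b c
  | cons d s ih =>
    set S : Set L := dstarSet a {b, c} with hS
    have hne : S.Nonempty :=
      ⟨dstar a [b], [b], by simp, by simp, rfl⟩
    by_cases hpar : s.length % 2 = 0
    · -- sup case
      have himg : (fun x => diam (d :: s) x) '' S
          = (fun y => d ⊔ y) '' ((fun x => diam s x) '' S) := by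
        rw [Set.image_image]
        apply Set.image_congr
        intro x _
        simp [diam, hpar]
      have hC : ((fun x => diam s x) '' S).Countable :=
        (dstarSet_countable a (((Set.countable_singleton c).insert b))).image _
      have hD : DirectedOn (· ≥ ·) ((fun x => diam s x) '' S) := by
        rintro x ⟨u, hu, rfl⟩ y ⟨v, hv, rfl⟩
        obtain ⟨z, hz, hzu, hzv⟩ := dstarSet_directed a {b, c} u hu v hv
        exact ⟨diam s z, ⟨z, hz, rfl⟩, diam_mono s hzu, diam_mono s hzv⟩
      have := hLC d _ _ (hne.image _) hC hD ih
      rw [show diam (d :: s) (a ⊔ b ⊓ c) = d ⊔ diam s (a ⊔ b ⊓ c) by simp [diam, hpar], himg]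
      exact this
    · -- inf case
      have himg : (fun x => diam (d :: s) x) '' S
          = (fun y => d ⊓ y) '' ((fun x => diam s x) '' S) := by
        rw [Set.image_image]
        apply Set.image_congr
        intro x _
        simp [diam, hpar]
      have := isGLB_inf_image d (hne.image _) ih
      rw [show diam (d :: s) (a ⊔ b ⊓ c) = d ⊓ diam s (a ⊔ b ⊓ c) by simp [diam, hpar], himg]
      exact this
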